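/- arXiv:1710.00376 — 3 statements merged into one kernel-verified Lean document; each statement's English description precedes it below -/
import Mathlib

section
/- Let n ≥ 2 and let V be the vector space over ℂ with basis indexed by n-element subsets of {1, ..., 2n-1}. Define a linear map φ: V → V by φ(v_S) = Σ_T c(S,T) v_T, where c(S,S) = 1, c(S,T) = (-1)^d if S ∩ T = {d} with S ≠ T, and c(S,T) = 0 otherwise. Then the matrix of φ is well-defined and for n = 2, the kernel of φ has dimension 2 (the 2nd Catalan number). -/
/-- The matrix entry `⟨φ(v_S), v_T⟩` of the Jacobi-relation operator `φ` on
`V_{n,3}`: it is `1` if `S = T`, `(-1)^d` if `S ∩ T = {d}` with `S ≠ T`, and `0`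
otherwise. -/
noncomputable def phiCoeff (S T : Finset ℕ) : ℂ :=
  if S = T then 1
  else if (S ∩ T).card = 1 then ∑ d ∈ S ∩ T, (-1 : ℂ) ^ d
  else 0

/-- The index type: `n`-element subsets of `{1, …, 2n-1}`. -/
abbrev SubsetIdx (n : ℕ) := {S // S ∈ (Finset.Icc 1 (2 * n - 1)).powersetCard n}

/-- The matrix of `φ` in the basis `{v_S}`: `φ(v_S) = ∑_T ⟨φ(v_S), v_T⟩ v_T`. -/
noncomputable def phiMatrix (n : ℕ) : Matrix (SubsetIdx n) (SubsetIdx n) ℂ :=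
  Matrix.of fun T S => phiCoeff S.val T.val


/-! For `n = 2` the three index sets `{1,2}, {1,3}, {2,3}` pairwise meet in one point and
together cover `{1,2,3}`, so for `S ≠ T` we get `∑ S + ∑ T = ∑ (S ∪ T) + ∑ (S ∩ T) = 6 + d`
where `S ∩ T = {d}`. Hence `⟨φ(v_S), v_T⟩ = ε_S ε_T` with `ε_S = (-1)^(∑ S)`: the matrix of `φ`
is the rank-one matrix `ε εᵀ`, whose kernel is the hyperplane `ε ⬝ᵥ x = 0`. -/

open Matrix Module

theorem Matrix.ker_mulVecLin_vecMulVec {K ι : Type*} [Field K] [Fintype ι] [DecidableEq ι]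
    {u : ι → K} (hu : u ≠ 0) (v : ι → K) :
    LinearMap.ker (vecMulVec u v).mulVecLin = LinearMap.ker (dotProductEquiv K ι v) := by
  ext x
  simp [vecMulVec_mulVec, smul_eq_zero, hu]

theorem Matrix.finrank_ker_mulVecLin_vecMulVec_add_one {K ι : Type*} [Field K] [Fintype ι]
    [DecidableEq ι] {u v : ι → K} (hu : u ≠ 0) (hv : v ≠ 0) :
    finrank K (LinearMap.ker (vecMulVec u v).mulVecLin) + 1 = Fintype.card ι := by
  rw [ker_mulVecLin_vecMulVec hu, Dual.finrank_ker_add_one_of_ne_zero, finrank_fintype_fun_eq_card]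
  exact (LinearEquiv.map_ne_zero_iff _).mpr hv

theorem phiCoeff_self (S : Finset ℕ) : phiCoeff S S = 1 := by
  simp [phiCoeff]

theorem phiCoeff_of_inter_eq_singleton {S T : Finset ℕ} {d : ℕ} (hST : S ≠ T)
    (h : S ∩ T = {d}) : phiCoeff S T = (-1) ^ d := by
  simp [phiCoeff, hST, h]

noncomputable def sumSign (S : Finset ℕ) : ℂ := (-1) ^ ∑ d ∈ S, d

theorem sumSign_ne_zero (S : Finset ℕ) : sumSign S ≠ 0 := by
  simp [sumSign]

theorem sumSign_mul_self (S : Finset ℕ) : sumSign S * sumSign S = 1 := by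
  simp [sumSign, ← pow_add, ← two_mul, pow_mul]

theorem sumSign_mul_sumSign (S T : Finset ℕ) :
    sumSign S * sumSign T = sumSign (S ∪ T) * sumSign (S ∩ T) := by
  simp only [sumSign, ← pow_add, Finset.sum_union_inter]

theorem SubsetIdx.union_eq_Icc_three_and_card_inter_eq_one {S T : SubsetIdx 2} (hST : S ≠ T) :
    S.1 ∪ T.1 = Finset.Icc 1 3 ∧ (S.1 ∩ T.1).card = 1 := by
  revert S T; decide

theorem phiCoeff_two_eq_sumSign_mul (S T : SubsetIdx 2) :
    phiCoeff S.1 T.1 = sumSign S.1 * sumSign T.1 := by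
  by_cases hST : S = T
  · rw [hST, phiCoeff_self, sumSign_mul_self]
  obtain ⟨hunion, hinter⟩ := SubsetIdx.union_eq_Icc_three_and_card_inter_eq_one hST
  obtain ⟨d, hd⟩ := Finset.card_eq_one.mp hinter
  rw [phiCoeff_of_inter_eq_singleton (Subtype.coe_injective.ne hST) hd, sumSign_mul_sumSign,
    hunion, hd]
  have hsum : ∑ i ∈ Finset.Icc 1 3, i = 6 := rfl
  norm_num [sumSign, hsum]

theorem phiMatrix_two_eq_vecMulVec :
    phiMatrix 2 = vecMulVec (fun S => sumSign S.1) (fun S => sumSign S.1) := by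
  ext T S
  rw [phiMatrix, of_apply, phiCoeff_two_eq_sumSign_mul, vecMulVec_apply, mul_comm]

/-- Let `V` be the complex vector space with basis `{v_S}` indexed by the
`2`-element subsets of `{1, 2, 3}`, and let `φ : V → V` be the well-defined
linear map with matrix entries `⟨φ(v_S), v_T⟩ = 1` if `S = T`, `(-1)^d` if
`S ∩ T = {d}` with `S ≠ T`, and `0` otherwise.  Then the kernel of `φ` has
dimension `2`, the second Catalan number. -/
theorem ker_phi_n2_dim_two :
    Module.finrank ℂ (LinearMap.ker (phiMatrix 2).mulVecLin) = 2 ∧ catalan 2 = 2 := by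
  refine ⟨?_, catalan_two⟩
  have hsign : (fun S : SubsetIdx 2 => sumSign S.1) ≠ 0 := fun h =>
    sumSign_ne_zero _ (congrFun h ⟨{1, 2}, by decide⟩)
  have hcard : Fintype.card (SubsetIdx 2) = 3 := by decide
  have hrank := finrank_ker_mulVecLin_vecMulVec_add_one hsign hsign
  rw [← phiMatrix_two_eq_vecMulVec, hcard] at hrank
  omega
end

section
/- For n ≥ 2, let V be the ℂ-vector space with basis {v_S : S an n-element subset of {1,...,2n-1}} and let φ: V → V be defined by ⟨φ(v_S), v_T⟩ = 1 if S = T, (-1)^d if S ∩ T = {d}, and 0 if S ≠ T and |S ∩ T| ≥ 2. Then the trace of φ equals binomial(2n-1, n), and the trace of φ equals Σ_{i=0}^{n-1} (1 + (n-i)(-1)^{n-i}) · f^{(2^i 1^{2n-1-2i})}, where f^λ denotes the number of standard Young tableaux of shape λ. -/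
/-- The cells of the two-column Young diagram: `i` rows of length 2 and rows
`i, …, r-1` of length 1. -/
def twoColShape (i r : ℕ) : Finset (ℕ × ℕ) :=
  (Finset.range i ×ˢ Finset.range 2) ∪ ((Finset.Ico i r) ×ˢ {0})

/-- A standard Young tableau on a finite set of cells. -/
def IsSYT (cells : Finset (ℕ × ℕ)) (f : {x // x ∈ cells} → Fin cells.card) : Prop :=
  Function.Bijective f ∧
    (∀ a b : {x // x ∈ cells}, a.val.1 = b.val.1 → a.val.2 < b.val.2 → f a < f b) ∧
    (∀ a b : {x // x ∈ cells}, a.val.2 = b.val.2 → a.val.1 < b.val.1 → f a < f b)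

/-- The number of standard Young tableaux with the given cells; for a partition
shape `λ` this is `f^λ`, the dimension of the Specht module `S^λ`. -/
noncomputable def sytCount (cells : Finset (ℕ × ℕ)) : ℕ :=
  Nat.card {f : {x // x ∈ cells} → Fin cells.card // IsSYT cells f}

open Finset

theorem sytCount_empty : sytCount ∅ = 1 := by
  rw [sytCount, Nat.card_eq_one_iff_unique]
  exact ⟨inferInstance, ⟨⟨isEmptyElim, by simp [IsSYT]⟩⟩⟩

def IsCornerCell (cells : Finset (ℕ × ℕ)) (c : ℕ × ℕ) : Prop :=
  ∀ b ∈ cells, (b.1 = c.1 → b.2 ≤ c.2) ∧ (b.2 = c.2 → b.1 ≤ c.1)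

instance (cells : Finset (ℕ × ℕ)) : DecidablePred (IsCornerCell cells) :=
  fun _ => inferInstanceAs (Decidable (∀ b ∈ cells, _))

namespace IsSYT

variable {cells : Finset (ℕ × ℕ)} {f : {x // x ∈ cells} → Fin cells.card}

theorem of_injective (hinj : Function.Injective f)
    (hrow : ∀ a b : {x // x ∈ cells}, a.val.1 = b.val.1 → a.val.2 < b.val.2 → f a < f b)
    (hcol : ∀ a b : {x // x ∈ cells}, a.val.2 = b.val.2 → a.val.1 < b.val.1 → f a < f b) :
    IsSYT cells f :=
  ⟨(Fintype.bijective_iff_injective_and_card f).2 ⟨hinj, by simp⟩, hrow, hcol⟩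

theorem isCornerCell (hf : IsSYT cells f) {x : {x // x ∈ cells}}
    (hx : (f x : ℕ) + 1 = cells.card) : IsCornerCell cells x.1 := by
  intro b hb
  have hbx := (f ⟨b, hb⟩).2
  constructor
  · intro h
    by_contra! hlt
    exact absurd (hf.2.1 x ⟨b, hb⟩ h.symm hlt) (by simp only [not_lt, Fin.le_def]; omega)
  · intro h
    by_contra! hlt
    exact absurd (hf.2.2 x ⟨b, hb⟩ h.symm hlt) (by simp only [not_lt, Fin.le_def]; omega)

variable {c : ℕ × ℕ}

def eraseTop (hf : IsSYT cells f) (hc : c ∈ cells)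
    (htop : (f ⟨c, hc⟩ : ℕ) + 1 = cells.card) :
    {x // x ∈ cells.erase c} → Fin (cells.erase c).card := fun x =>
  (f ⟨x, mem_of_mem_erase x.2⟩).castLT <| by
    have hne : f ⟨x, mem_of_mem_erase x.2⟩ ≠ f ⟨c, hc⟩ :=
      hf.1.1.ne (Subtype.coe_ne_coe.1 (ne_of_mem_erase x.2))
    have := Fin.val_ne_of_ne hne
    have := (f ⟨x, mem_of_mem_erase x.2⟩).2
    have := card_erase_add_one hc
    omega

theorem isSYT_eraseTop (hf : IsSYT cells f) (hc : c ∈ cells)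
    (htop : (f ⟨c, hc⟩ : ℕ) + 1 = cells.card) : IsSYT (cells.erase c) (hf.eraseTop hc htop) :=
  of_injective
    (fun a b hab => Subtype.ext (by simpa using hf.1.1 (Fin.ext (congrArg Fin.val hab :))))
    (fun a b => hf.2.1 ⟨a, mem_of_mem_erase a.2⟩ ⟨b, mem_of_mem_erase b.2⟩)
    (fun a b => hf.2.2 ⟨a, mem_of_mem_erase a.2⟩ ⟨b, mem_of_mem_erase b.2⟩)

end IsSYT

section Extend

variable {cells : Finset (ℕ × ℕ)} {c : ℕ × ℕ}

def extendTop (hc : c ∈ cells) (g : {x // x ∈ cells.erase c} → Fin (cells.erase c).card) :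
    {x // x ∈ cells} → Fin cells.card := fun x =>
  if h : x.1 = c then ⟨(cells.erase c).card, card_erase_lt_of_mem hc⟩
  else (g ⟨x, mem_erase.2 ⟨h, x.2⟩⟩).castLE card_erase_le

variable (hc : c ∈ cells) (g : {x // x ∈ cells.erase c} → Fin (cells.erase c).card)

theorem extendTop_of_eq {x : {x // x ∈ cells}} (hx : x.1 = c) :
    (extendTop hc g x : ℕ) = (cells.erase c).card := by
  simp [extendTop, hx]

theorem extendTop_of_ne {x : {x // x ∈ cells}} (hx : x.1 ≠ c) :
    (extendTop hc g x : ℕ) = g ⟨x, mem_erase.2 ⟨hx, x.2⟩⟩ := by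
  simp [extendTop, hx]

theorem extendTop_lt_extendTop {a b : {x // x ∈ cells}} (ha : a.1 ≠ c)
    (hlt : ∀ hb : b.1 ≠ c,
      g ⟨a, mem_erase.2 ⟨ha, a.2⟩⟩ < g ⟨b, mem_erase.2 ⟨hb, b.2⟩⟩) :
    extendTop hc g a < extendTop hc g b := by
  rw [Fin.lt_def, extendTop_of_ne hc g ha]
  by_cases hb : b.1 = c
  · rw [extendTop_of_eq hc g hb]
    exact Fin.isLt _
  · rw [extendTop_of_ne hc g hb]
    exact hlt hb

theorem isSYT_extendTop (hcorner : IsCornerCell cells c) (hg : IsSYT (cells.erase c) g) :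
    IsSYT cells (extendTop hc g) := by
  refine IsSYT.of_injective (fun a b hab => ?_) (fun a b hrow hlt => ?_)
    (fun a b hcol hlt => ?_)
  · by_cases ha : a.1 = c <;> by_cases hb : b.1 = c
    · exact Subtype.ext (ha.trans hb.symm)
    · exact absurd hab (extendTop_lt_extendTop hc g hb fun h => absurd ha h).ne'
    · exact absurd hab (extendTop_lt_extendTop hc g ha fun h => absurd hb h).ne
    · have hval := congrArg Fin.val hab
      rw [extendTop_of_ne hc g ha, extendTop_of_ne hc g hb] at hval
      simpa using hg.1.1 (Fin.ext hval)
  · have ha : a.1 ≠ c := fun ha => by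
      have := (hcorner b b.2).1 (ha ▸ hrow.symm)
      rw [← ha] at this
      omega
    exact extendTop_lt_extendTop hc g ha fun hb => hg.2.1 _ _ hrow hlt
  · have ha : a.1 ≠ c := fun ha => by
      have := (hcorner b b.2).2 (ha ▸ hcol.symm)
      rw [← ha] at this
      omega
    exact extendTop_lt_extendTop hc g ha fun hb => hg.2.2 _ _ hcol hlt

end Extend

section Corners

variable {cells : Finset (ℕ × ℕ)} {c : ℕ × ℕ}

def sytEraseCornerEquiv (hc : c ∈ cells) (hcorner : IsCornerCell cells c) :
    {f // IsSYT cells f ∧ (f ⟨c, hc⟩ : ℕ) + 1 = cells.card} ≃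
      {g // IsSYT (cells.erase c) g} where
  toFun F := ⟨F.2.1.eraseTop hc F.2.2, F.2.1.isSYT_eraseTop hc F.2.2⟩
  invFun G := ⟨extendTop hc G.1, isSYT_extendTop hc G.1 hcorner G.2, by
    rw [extendTop_of_eq hc _ rfl, card_erase_add_one hc]⟩
  left_inv F := by
    ext x
    by_cases hx : x.1 = c
    · obtain rfl : x = ⟨c, hc⟩ := Subtype.ext hx
      rw [extendTop_of_eq hc _ rfl]
      have := card_erase_add_one hc
      have := F.2.2
      omega
    · rw [extendTop_of_ne hc _ hx]
      rfl
  right_inv G := by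
    ext x
    exact extendTop_of_ne hc _ (ne_of_mem_erase x.2)

theorem sytCount_eq_sum_card_top (hne : cells.Nonempty) :
    sytCount cells =
      ∑ x : {x // x ∈ cells},
        Nat.card {f // IsSYT cells f ∧ (f x : ℕ) + 1 = cells.card} := by
  let top : Fin cells.card := ⟨cells.card - 1, Nat.sub_lt hne.card_pos one_pos⟩
  let topCell (F : {f // IsSYT cells f}) : {x // x ∈ cells} :=
    (Equiv.ofBijective F.1 F.2.1).symm top
  have htopCell : ∀ F x, topCell F = x ↔ (F.1 x : ℕ) + 1 = cells.card := by
    intro F x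
    rw [Equiv.symm_apply_eq, Fin.ext_iff, Equiv.ofBijective_apply]
    have := hne.card_pos
    simp only [top]
    omega
  rw [sytCount, ← Nat.card_congr (Equiv.sigmaFiberEquiv topCell), Nat.card_sigma]
  refine Fintype.sum_congr _ _ fun x => Nat.card_congr ?_
  exact (Equiv.subtypeEquivRight fun F => htopCell F x).trans
    (Equiv.subtypeSubtypeEquivSubtypeInter (IsSYT cells) fun f => (f x : ℕ) + 1 = cells.card)

theorem sytCount_eq_sum_erase (hne : cells.Nonempty) :
    sytCount cells = ∑ c ∈ cells with IsCornerCell cells c, sytCount (cells.erase c) := by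
  have hterm : ∀ x : {x // x ∈ cells},
      Nat.card {f // IsSYT cells f ∧ (f x : ℕ) + 1 = cells.card} =
        if IsCornerCell cells x then sytCount (cells.erase x) else 0 := by
    intro x
    split_ifs with hcorner
    · exact Nat.card_congr (sytEraseCornerEquiv x.2 hcorner)
    · rw [Nat.card_eq_zero]
      left
      exact ⟨fun F => hcorner (F.2.1.isCornerCell F.2.2)⟩
  rw [sytCount_eq_sum_card_top hne, Fintype.sum_congr _ _ hterm,
    sum_coe_sort cells fun x => if IsCornerCell cells x then sytCount (cells.erase x) else 0,
    sum_filter]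

end Corners

def ballot (N j : ℕ) : ℤ := N.choose j - N.choose (j + 1)

theorem ballot_succ_succ (N j : ℕ) :
    ballot (N + 1) (j + 1) = ballot N j + ballot N (j + 1) := by
  simp only [ballot, Nat.choose_succ_succ' N (j + 1), Nat.choose_succ_succ' N j]
  push_cast
  ring

theorem ballot_self (N : ℕ) : ballot N N = 1 := by
  simp [ballot]

theorem ballot_eq_zero_of_lt {N j : ℕ} (h : N < j) : ballot N j = 0 := by
  simp [ballot, Nat.choose_eq_zero_of_lt h, Nat.choose_eq_zero_of_lt (h.trans j.lt_succ_self)]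

theorem ballot_two_mul_add_one_self (p : ℕ) : ballot (2 * p + 1) p = 0 := by
  rw [ballot, Nat.choose_symm_half, sub_self]

theorem sum_range_ballot (N j K : ℕ) :
    ∑ k ∈ range K, ballot N (j + k) = N.choose j - N.choose (j + K) := by
  simpa [ballot, add_assoc] using sum_range_sub' (fun k => (N.choose (j + k) : ℤ)) K

theorem sum_range_mul_alternating_ballot (N j K : ℕ) :
    ∑ k ∈ range K, ((k : ℤ) + 1) * (-1) ^ k * ballot (N + 2) (j + k + 2) =
      ballot N j - (-1) ^ K * (ballot N (j + K) + K * ballot (N + 1) (j + K + 1)) := by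
  induction K with
  | zero => simp
  | succ K ih =>
    rw [sum_range_succ, ih, ← add_assoc j K 1]
    push_cast
    linear_combination ((K : ℤ) + 1) * (-1) ^ K * ballot_succ_succ (N + 1) (j + K + 1) +
      (-1) ^ K * ballot_succ_succ N (j + K)

section TwoColumn

variable {i r : ℕ}

theorem mem_twoColShape (hir : i ≤ r) {p : ℕ × ℕ} :
    p ∈ twoColShape i r ↔ p.2 = 0 ∧ p.1 < r ∨ p.2 = 1 ∧ p.1 < i := by
  simp only [twoColShape, mem_union, mem_product, mem_range, mem_Ico, mem_singleton]
  omega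

theorem isCornerCell_twoColShape_iff (hir : i ≤ r) {p : ℕ × ℕ} (hp : p ∈ twoColShape i r) :
    IsCornerCell (twoColShape i r) p ↔
      p.2 = 1 ∧ p.1 + 1 = i ∨ p.2 = 0 ∧ p.1 + 1 = r ∧ i < r := by
  obtain ⟨a, b⟩ := p
  rw [mem_twoColShape hir] at hp
  constructor
  · intro h
    have hdown := fun hmem => (h (a + 1, b) hmem).2 rfl
    have hright := fun hmem => (h (a, 1) hmem).1 rfl
    simp only [mem_twoColShape hir, imp_iff_not_or, true_and] at hdown hright
    simp only at hp ⊢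
    omega
  · rintro hcorner ⟨a', b'⟩ hmem
    rw [mem_twoColShape hir] at hmem
    simp only
    omega

theorem erase_twoColShape_col_zero (hir : i ≤ r) :
    (twoColShape i (r + 1)).erase (r, 0) = twoColShape i r := by
  ext ⟨a, b⟩
  rw [mem_erase, mem_twoColShape (by omega), mem_twoColShape hir]
  simp only [ne_eq, Prod.mk.injEq]
  omega

theorem erase_twoColShape_col_one (hir : i + 1 ≤ r) :
    (twoColShape (i + 1) r).erase (i, 1) = twoColShape i r := by
  ext ⟨a, b⟩
  rw [mem_erase, mem_twoColShape hir, mem_twoColShape (by omega)]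
  simp only [ne_eq, Prod.mk.injEq]
  omega

theorem filter_isCornerCell_twoColShape (hir : i ≤ r) :
    (twoColShape i r).filter (IsCornerCell (twoColShape i r)) =
      (twoColShape i r).filter
        (fun p => p.2 = 1 ∧ p.1 + 1 = i ∨ p.2 = 0 ∧ p.1 + 1 = r ∧ i < r) :=
  filter_congr fun _ hp => isCornerCell_twoColShape_iff hir hp

theorem sytCount_twoColShape_zero_succ (r : ℕ) :
    sytCount (twoColShape 0 (r + 1)) = sytCount (twoColShape 0 r) := by
  have hcorners : (twoColShape 0 (r + 1)).filter
      (fun p => p.2 = 1 ∧ p.1 + 1 = 0 ∨ p.2 = 0 ∧ p.1 + 1 = r + 1 ∧ 0 < r + 1) =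
        {(r, 0)} := by
    ext ⟨a, b⟩
    simp only [mem_filter, mem_twoColShape (Nat.zero_le _), mem_singleton, Prod.mk.injEq]
    omega
  rw [sytCount_eq_sum_erase ⟨(r, 0), by simp [mem_twoColShape]⟩,
    filter_isCornerCell_twoColShape (Nat.zero_le _), hcorners, sum_singleton,
    erase_twoColShape_col_zero (Nat.zero_le _)]

theorem sytCount_twoColShape_succ_succ (hir : i < r) :
    sytCount (twoColShape (i + 1) (r + 1)) =
      sytCount (twoColShape i (r + 1)) + sytCount (twoColShape (i + 1) r) := by
  have hcorners : (twoColShape (i + 1) (r + 1)).filter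
      (fun p => p.2 = 1 ∧ p.1 + 1 = i + 1 ∨ p.2 = 0 ∧ p.1 + 1 = r + 1 ∧ i + 1 < r + 1) =
        {(i, 1), (r, 0)} := by
    ext ⟨a, b⟩
    simp only [mem_filter, mem_twoColShape (by omega : i + 1 ≤ r + 1), mem_insert, mem_singleton,
      Prod.mk.injEq]
    omega
  rw [sytCount_eq_sum_erase ⟨(r, 0), (mem_twoColShape (by omega)).2 (.inl ⟨rfl, by omega⟩)⟩,
    filter_isCornerCell_twoColShape (by omega), hcorners, sum_pair (by simp),
    erase_twoColShape_col_one (by omega), erase_twoColShape_col_zero hir]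

theorem sytCount_twoColShape_succ_self (i : ℕ) :
    sytCount (twoColShape (i + 1) (i + 1)) = sytCount (twoColShape i (i + 1)) := by
  have hcorners : (twoColShape (i + 1) (i + 1)).filter
      (fun p => p.2 = 1 ∧ p.1 + 1 = i + 1 ∨ p.2 = 0 ∧ p.1 + 1 = i + 1 ∧ i + 1 < i + 1) =
        {(i, 1)} := by
    ext ⟨a, b⟩
    simp only [mem_filter, mem_twoColShape le_rfl, mem_singleton, Prod.mk.injEq]
    omega
  rw [sytCount_eq_sum_erase ⟨(i, 1), by simp [mem_twoColShape]⟩,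
    filter_isCornerCell_twoColShape le_rfl, hcorners, sum_singleton,
    erase_twoColShape_col_one le_rfl]

theorem sytCount_twoColShape (hir : i ≤ r) :
    (sytCount (twoColShape i r) : ℤ) = ballot (r + i) r := by
  induction r generalizing i with
  | zero =>
    obtain rfl : i = 0 := by omega
    simp [twoColShape, sytCount_empty, ballot_self]
  | succ r ihr =>
    induction i with
    | zero =>
      rw [sytCount_twoColShape_zero_succ, ihr (i := 0) r.zero_le, add_zero, add_zero, ballot_self,
        ballot_self]
    | succ i ihi =>
      rcases (Nat.succ_le_succ_iff.1 hir).lt_or_eq with hlt | rfl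
      · rw [sytCount_twoColShape_succ_succ hlt, Nat.cast_add, ihi (by omega),
          ihr (i := i + 1) hlt, show r + 1 + (i + 1) = r + i + 1 + 1 by omega, ballot_succ_succ]
        ring_nf
      · rw [sytCount_twoColShape_succ_self, ihi (by omega),
          show i + 1 + (i + 1) = 2 * i + 1 + 1 by omega, ballot_succ_succ,
          ballot_two_mul_add_one_self, zero_add]
        ring_nf

end TwoColumn

theorem sum_range_weight_mul_sytCount {n : ℕ} (hn : 2 ≤ n) :
    ∑ i ∈ range n, (1 + ((n : ℤ) - i) * (-1) ^ (n - i)) *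
      (sytCount (twoColShape i (2 * n - 1 - i)) : ℤ) = (2 * n - 1).choose n := by
  obtain ⟨p, rfl⟩ : ∃ p, n = p + 2 := ⟨n - 2, by omega⟩
  -- after reindexing by `k = n - 1 - i` the columns have lengths `n + k` and `n - 1 - k`
  have hterm : ∀ k ∈ range (p + 2),
      (1 + (((p + 2 : ℕ) : ℤ) - (p + 2 - 1 - k : ℕ)) * (-1) ^ (p + 2 - (p + 2 - 1 - k))) *
        (sytCount (twoColShape (p + 2 - 1 - k) (2 * (p + 2) - 1 - (p + 2 - 1 - k))) : ℤ) =
      ballot (2 * p + 3) (p + 2 + k) -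
        ((k : ℤ) + 1) * (-1) ^ k * ballot (2 * p + 1 + 2) (p + k + 2) := by
    intro k hk
    have hk : k < p + 2 := mem_range.1 hk
    have hi : ((p + 2 - 1 - k : ℕ) : ℤ) = p + 1 - k := by omega
    rw [sytCount_twoColShape (by omega), show p + 2 - (p + 2 - 1 - k) = k + 1 by omega, hi,
      show 2 * (p + 2) - 1 - (p + 2 - 1 - k) = p + 2 + k by omega,
      show p + 2 + k + (p + 2 - 1 - k) = 2 * p + 3 by omega,
      show 2 * p + 1 + 2 = 2 * p + 3 by omega, show p + k + 2 = p + 2 + k by omega]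
    push_cast
    ring
  rw [← sum_range_reflect, sum_congr rfl hterm, sum_sub_distrib, sum_range_ballot,
    sum_range_mul_alternating_ballot, ballot_two_mul_add_one_self,
    ballot_eq_zero_of_lt (by omega), ballot_eq_zero_of_lt (by omega),
    Nat.choose_eq_zero_of_lt (by omega : 2 * p + 3 < p + 2 + (p + 2)),
    show 2 * (p + 2) - 1 = 2 * p + 3 by omega]
  simp

theorem trace_phiMatrix (n : ℕ) : (phiMatrix n).trace = (2 * n - 1).choose n := by
  have hdiag : ∀ S, (phiMatrix n).diag S = 1 := fun S => if_pos rfl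
  rw [Matrix.trace, Fintype.sum_congr _ _ hdiag, sum_const, card_univ, Fintype.card_coe,
    card_powersetCard, Nat.card_Icc, add_tsub_cancel_right, nsmul_one]

/-- For `n ≥ 2`, the trace of the operator `φ` on `V_{n,3}` equals
`binom(2n-1, n)`, and it also equals
`∑_{i=0}^{n-1} (1 + (n-i)(-1)^{n-i}) · f^{2^i 1^{2n-1-2i}}`, where `f^λ` is the
number of standard Young tableaux of shape `λ`. -/
theorem trace_phi (n : ℕ) (hn : 2 ≤ n) :
    Matrix.trace (phiMatrix n) = (Nat.choose (2 * n - 1) n : ℂ) ∧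
    Matrix.trace (phiMatrix n) =
      ∑ i ∈ Finset.range n,
        (1 + ((n : ℂ) - (i : ℂ)) * (-1) ^ (n - i)) *
          (sytCount (twoColShape i (2 * n - 1 - i)) : ℂ) := by
  refine ⟨trace_phiMatrix n, ?_⟩
  rw [trace_phiMatrix]
  exact_mod_cast (sum_range_weight_mul_sytCount hn).symm
end

section
/- Let n ≥ 2. In the free LAnKe, the generalized Jacobi identity [[x_1,...,x_n], x_{n+1},...,x_{2n-1}] = Σ_{i=1}^n [x_1,...,x_{i-1}, [x_i, x_{n+1},...,x_{2n-1}], x_{i+1},...,x_n], applied with all x_j equal to distinct basis elements, is equivalent (after using antisymmetry to move the inner bracket to the front and reorder) to the Garnir relation g^t_{c,n-1} exchanging the entire column c+1 (of length n-1) with all but one entry of column c (of length n) in a Young tableau, summed over the entry that remains. -/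
/-- Let `n = m + 2 ≥ 2` and let `W(u, v)` represent the bracketed word
`[[u_1, …, u_n], v_1, …, v_{n-1}]` in a complex vector space `M`, assumed
antisymmetric in the inner arguments `u` and in the outer arguments `v` (these
are the only relations used).  Let `a_1 < ⋯ < a_n` be the entries of column `c`
and `b_1 < ⋯ < b_{n-1}` the entries of column `c+1` of a Young tableau.  Then
the generalized Jacobi relation
`W(a, b) - ∑_i [a_1, …, a_{i-1}, [a_i, b_1, …, b_{n-1}], a_{i+1}, …, a_n]`
(each summand rewritten via antisymmetry as
`(-1)^{i-1}·W((a_i, b_1, …, b_{n-1}), (a_1, …, â_i, …, a_n))`)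
coincides with the Garnir relation `t̄ - ∑ s̄`, whose summands
`W((b_1, …, b_{i-1}, a_i, b_i, …, b_{n-1}), (a_1, …, â_i, …, a_n))` are obtained
by exchanging all of column `c+1` with all but the `i`-th entry of column `c`,
maintaining vertical order. -/
theorem jacobi_eq_garnir (m : ℕ) (M : Type*) [AddCommGroup M] [Module ℂ M]
    (W : (Fin (m + 2) → ℕ) → (Fin (m + 1) → ℕ) → M)
    (hW1 : ∀ (σ : Equiv.Perm (Fin (m + 2))) (u : Fin (m + 2) → ℕ) (v : Fin (m + 1) → ℕ),
      W (u ∘ σ) v = ((Equiv.Perm.sign σ : ℤ) : ℂ) • W u v)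
    (hW2 : ∀ (σ : Equiv.Perm (Fin (m + 1))) (u : Fin (m + 2) → ℕ) (v : Fin (m + 1) → ℕ),
      W u (v ∘ σ) = ((Equiv.Perm.sign σ : ℤ) : ℂ) • W u v)
    (a : Fin (m + 2) → ℕ) (b : Fin (m + 1) → ℕ)
    (ha : StrictMono a) (hb : StrictMono b) :
    W a b - ∑ i : Fin (m + 2),
        ((-1 : ℂ) ^ (i : ℕ)) • W (Fin.cons (a i) b) (fun k => a (i.succAbove k))
      = W a b - ∑ i : Fin (m + 2),
          W (i.insertNth (a i) b) (fun k => a (i.succAbove k)) := by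
  congr 1
  refine Finset.sum_congr rfl fun i _ => ?_
  have hfun : i.insertNth (a i) b = (Fin.cons (a i) b : Fin (m + 2) → ℕ) ∘ i.cycleRange := by
    funext j
    refine Fin.succAboveCases i ?_ ?_ j
    · simp [Fin.cycleRange_self]
    · intro k
      simp [Fin.cycleRange_succAbove]
  rw [hfun, hW1, Fin.sign_cycleRange]
  push_cast
  rfl
end
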